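/- Suppose M := sup_{t≥0}‖L(t)‖ < ∞ and the equation x'(t) = L(t)x_t is shadowable. Then there exists Q' > 0 such that ‖T(t,s)φ‖ ≤ Q'‖φ‖ for all 0 ≤ t ≤ s and all φ ∈ 𝒰(s), where T(t,s) for t ≤ s denotes the inverse of T(s,t)|_{𝒰(t)} : 𝒰(t) → 𝒰(s). -/

import Mathlib

open Set

noncomputable section

/-- The Euclidean state space ℝ^d. -/
abbrev Rd (d : ℕ) : Type := EuclideanSpace ℝ (Fin d)

/-- The phase space C = C([-r,0], ℝ^d) with the supremum norm. -/
abbrev Ph (d : ℕ) (r : ℝ) : Type := C(Set.Icc (-r) (0:ℝ), Rd d)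

/-- The segment x_t ∈ C of a continuous function x : ℝ → ℝ^d, x_t(θ) = x(t+θ). -/
def seg (d : ℕ) (r : ℝ) (x : ℝ → Rd d) (hx : Continuous x) (t : ℝ) : Ph d r :=
  ⟨fun θ => x (t + θ.1), hx.comp (continuous_const.add continuous_subtype_val)⟩

/-- `x` is a solution of x'(t) = L(t)x_t on [s, ∞) (right-hand derivative at s). -/
def IsSol (d : ℕ) (r : ℝ) (L : ℝ → (Ph d r →L[ℝ] Rd d)) (s : ℝ)
    (x : ℝ → Rd d) (hx : Continuous x) : Prop :=
  ∀ t, s ≤ t → HasDerivWithinAt x (L t (seg d r x hx t)) (Set.Ici s) t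

/-- `T` is the solution operator family of x'(t) = L(t)x_t :
for every s ≥ 0 and φ ∈ C there is a solution x on [s,∞) with x_s = φ and x_t = T(t,s)φ. -/
def IsSolOp (d : ℕ) (r : ℝ) (L : ℝ → (Ph d r →L[ℝ] Rd d))
    (T : ℝ → ℝ → (Ph d r →L[ℝ] Ph d r)) : Prop :=
  ∀ s, 0 ≤ s → ∀ φ : Ph d r, ∃ (x : ℝ → Rd d) (hx : Continuous x),
    IsSol d r L s x hx ∧ seg d r x hx s = φ ∧ ∀ t, s ≤ t → seg d r x hx t = T t s φ

/-- The evolution family property of the solution operators. -/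
def Cocycle (d : ℕ) (r : ℝ) (T : ℝ → ℝ → (Ph d r →L[ℝ] Ph d r)) : Prop :=
  (∀ s, 0 ≤ s → T s s = ContinuousLinearMap.id ℝ (Ph d r)) ∧
  ∀ τ t s, 0 ≤ s → s ≤ t → t ≤ τ → T τ s = (T τ t).comp (T t s)

/-- Uniqueness of solutions with a given initial segment at time s. -/
def UniqueSol (d : ℕ) (r : ℝ) (L : ℝ → (Ph d r →L[ℝ] Rd d)) : Prop :=
  ∀ s, 0 ≤ s → ∀ (x y : ℝ → Rd d) (hx : Continuous x) (hy : Continuous y),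
    IsSol d r L s x hx → IsSol d r L s y hy → seg d r x hx s = seg d r y hy s →
    ∀ t, s - r ≤ t → x t = y t

/-- Eq. x'(t) = L(t)x_t is shadowable. -/
def Shadowable (d : ℕ) (r : ℝ) (L : ℝ → (Ph d r →L[ℝ] Rd d)) : Prop :=
  ∀ ε, 0 < ε → ∃ δ, 0 < δ ∧ ∀ (y yd : ℝ → Rd d) (hy : Continuous y),
    ContinuousOn yd (Set.Ici 0) →
    (∀ t, 0 ≤ t → HasDerivWithinAt y (yd t) (Set.Ici 0) t) →
    (∀ t, 0 ≤ t → ‖yd t - L t (seg d r y hy t)‖ ≤ δ) →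
    ∃ (x : ℝ → Rd d) (hx : Continuous x), IsSol d r L 0 x hx ∧
      ∀ t, 0 ≤ t → ‖seg d r x hx t - seg d r y hy t‖ ≤ ε

/-- Eq. x'(t) = L(t)x_t is Hyers–Ulam stable. -/
def HyersUlam (d : ℕ) (r : ℝ) (L : ℝ → (Ph d r →L[ℝ] Rd d)) : Prop :=
  ∃ κ, 0 < κ ∧ ∀ δ, 0 < δ → ∀ (y yd : ℝ → Rd d) (hy : Continuous y),
    ContinuousOn yd (Set.Ici 0) →
    (∀ t, 0 ≤ t → HasDerivWithinAt y (yd t) (Set.Ici 0) t) →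
    (∀ t, 0 ≤ t → ‖yd t - L t (seg d r y hy t)‖ ≤ δ) →
    ∃ (x : ℝ → Rd d) (hx : Continuous x), IsSol d r L 0 x hx ∧
      ∀ t, 0 ≤ t → ‖seg d r x hx t - seg d r y hy t‖ ≤ κ * δ

/-- The stable subspace 𝒮(s) = {φ ∈ C : sup_{t ≥ s} ‖T(t,s)φ‖ < ∞}. -/
def stableSub (d : ℕ) (r : ℝ) (T : ℝ → ℝ → (Ph d r →L[ℝ] Ph d r)) (s : ℝ) :
    Submodule ℝ (Ph d r) where
  carrier := {φ | ∃ M, ∀ t, s ≤ t → ‖T t s φ‖ ≤ M}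
  add_mem' := by
    rintro a b ⟨Ma, hMa⟩ ⟨Mb, hMb⟩
    refine ⟨Ma + Mb, fun t ht => ?_⟩
    calc ‖T t s (a + b)‖ = ‖T t s a + T t s b‖ := by rw [map_add]
    _ ≤ ‖T t s a‖ + ‖T t s b‖ := norm_add_le _ _
    _ ≤ Ma + Mb := add_le_add (hMa t ht) (hMb t ht)
  zero_mem' := ⟨0, fun t ht => by simp⟩
  smul_mem' := by
    rintro c a ⟨Ma, hMa⟩
    refine ⟨‖c‖ * Ma, fun t ht => ?_⟩
    rw [map_smul]
    have h1 : ‖c • (T t s) a‖ = ‖c‖ * ‖(T t s) a‖ := @norm_smul ℝ (Ph d r) _ _ _ _ c _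
    rw [h1]
    exact mul_le_mul_of_nonneg_left (hMa t ht) (norm_nonneg c)

/-- Eq. x'(t) = L(t)x_t admits an exponential dichotomy (with solution operators T). -/
def ExpDich (d : ℕ) (r : ℝ) (T : ℝ → ℝ → (Ph d r →L[ℝ] Ph d r)) : Prop :=
  ∃ (P : ℝ → (Ph d r →L[ℝ] Ph d r)) (D lam : ℝ), 0 < D ∧ 0 < lam ∧
    (∀ t, 0 ≤ t → (P t).comp (P t) = P t) ∧
    (∀ t s, 0 ≤ s → s ≤ t → (P t).comp (T t s) = (T t s).comp (P s)) ∧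
    (∀ t s, 0 ≤ s → s ≤ t →
      Set.BijOn (⇑(T t s)) (LinearMap.ker (P s : Ph d r →ₗ[ℝ] Ph d r) : Set (Ph d r))
        (LinearMap.ker (P t : Ph d r →ₗ[ℝ] Ph d r) : Set (Ph d r))) ∧
    (∀ t s, 0 ≤ s → s ≤ t → ‖(T t s).comp (P s)‖ ≤ D * Real.exp (-lam * (t - s))) ∧
    (∀ t s, 0 ≤ t → t ≤ s → ∀ φ ∈ LinearMap.ker (P t : Ph d r →ₗ[ℝ] Ph d r),
      ‖φ‖ ≤ D * Real.exp (-lam * (s - t)) * ‖T s t φ‖)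


/-!
Let `φ ∈ 𝒰` and let `x` be the solution with `x₀ = φ`. Cutting `x` off smoothly between the
times `s` and `s + 1` gives a pseudo-solution `y` whose defect is `O(‖x_s‖) = O(‖T(s,0)φ‖)`, by
Grönwall on a window of length `1 + r`. Shadowing is linear, hence Hyers–Ulam: some solution `x̂`
stays within `κ · defect` of `y`. As `y` vanishes eventually, `x̂₀ ∈ 𝒮(0)`. A Baire category
argument, using that `𝒰` is a finite-dimensional complement of `𝒮(0)`, gives `W` with
`‖T(τ,0)χ‖ ≤ W ‖φ - χ‖` for all `φ ∈ 𝒰`, `χ ∈ 𝒮(0)`, `τ ≥ 0`; with `χ = x̂₀` this bounds `x̂_t`,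
and `T(t,0)φ = y_t` is within `κ · defect` of `x̂_t`.
-/

section Segment

variable {d : ℕ} {r : ℝ}

theorem continuous_seg {x : ℝ → Rd d} (hx : Continuous x) : Continuous (seg d r x hx) :=
  ContinuousMap.continuous_of_continuous_uncurry _
    (hx.comp (continuous_fst.add (continuous_subtype_val.comp continuous_snd)))

theorem seg_sub {x y : ℝ → Rd d} (hx : Continuous x) (hy : Continuous y) (t : ℝ) :
    seg d r (fun τ => x τ - y τ) (hx.sub hy) t = seg d r x hx t - seg d r y hy t :=
  rfl

theorem seg_smul (c : ℝ) {x : ℝ → Rd d} (hx : Continuous x) (t : ℝ) :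
    seg d r (fun τ => c • x τ) (hx.const_smul c) t = c • seg d r x hx t :=
  rfl

theorem norm_le_norm_seg (hr : 0 ≤ r) {x : ℝ → Rd d} (hx : Continuous x) (t : ℝ) :
    ‖x t‖ ≤ ‖seg d r x hx t‖ := by
  simpa [seg] using (seg d r x hx t).norm_coe_le_norm ⟨0, by simpa using hr⟩

end Segment

section Solutions

variable {d : ℕ} {r : ℝ} {L : ℝ → (Ph d r →L[ℝ] Rd d)} {a s : ℝ} {x y : ℝ → Rd d}
  {hx : Continuous x} {hy : Continuous y}

theorem IsSol.mono (hsol : IsSol d r L a x hx) (has : a ≤ s) : IsSol d r L s x hx :=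
  fun t ht => (hsol t (has.trans ht)).mono (Ici_subset_Ici.2 has)

theorem IsSol.sub (hx' : IsSol d r L s x hx) (hy' : IsSol d r L s y hy) :
    IsSol d r L s (fun τ => x τ - y τ) (hx.sub hy) := fun t ht => by
  rw [seg_sub hx hy, map_sub]
  exact (hx' t ht).sub (hy' t ht)

theorem IsSol.const_smul (c : ℝ) (hsol : IsSol d r L s x hx) :
    IsSol d r L s (fun τ => c • x τ) (hx.const_smul c) := fun t ht => by
  rw [seg_smul, map_smul]
  exact (hsol t ht).const_smul c

theorem IsSol.eq_add_integral (hL : ContinuousOn L (Ici 0)) (hs : 0 ≤ s)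
    (hsol : IsSol d r L s x hx) {w : ℝ} (hw : s ≤ w) :
    x w = x s + ∫ u in s..w, L u (seg d r x hx u) := by
  have hint : IntervalIntegrable (fun u => L u (seg d r x hx u)) MeasureTheory.volume s w := by
    rw [intervalIntegrable_iff_integrableOn_Icc_of_le hw]
    exact ((hL.clm_apply (continuous_seg hx).continuousOn).mono
      fun u hu => hs.trans hu.1).integrableOn_compact isCompact_Icc
  rw [intervalIntegral.integral_eq_sub_of_hasDeriv_right_of_le hw hx.continuousOn
    (fun u hu => (hsol u hu.1.le).mono (Ioi_subset_Ici hu.1.le)) hint]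
  abel

end Solutions

theorem le_mul_exp_of_le_add_integral {g : ℝ → ℝ} {c K s τ : ℝ} (hg : Continuous g)
    (hg0 : ∀ w, 0 ≤ g w) (hK : 0 ≤ K) (h : ∀ w, s ≤ w → g w ≤ c + K * ∫ u in s..w, g u)
    (hτ : s ≤ τ) : g τ ≤ c * Real.exp (K * (τ - s)) := by
  set G : ℝ → ℝ := fun w => ∫ u in s..w, g u
  have hG : ∀ w, HasDerivAt G (g w) w := fun w => (hg.integral_hasStrictDerivAt s w).hasDerivAt
  have hG0 : ∀ w, s ≤ w → 0 ≤ G w := fun w hw =>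
    intervalIntegral.integral_nonneg hw fun u _ => hg0 u
  -- Grönwall's inequality applied to the primitive `G`, whose derivative `g` is at most `c + K G`
  have hGτ := norm_le_gronwallBound_of_norm_deriv_right_le (f := G) (δ := 0) (K := K) (ε := c)
    (fun w _ => (hG w).continuousAt.continuousWithinAt) (fun w _ => (hG w).hasDerivWithinAt)
    (by simp [G])
    (fun w hw => by
      rw [Real.norm_of_nonneg (hg0 w), Real.norm_of_nonneg (hG0 w hw.1)]
      linarith [h w hw.1])
    τ ⟨hτ, le_rfl⟩
  rw [Real.norm_of_nonneg (hG0 τ hτ)] at hGτ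
  have hbound : c + K * gronwallBound 0 K c (τ - s) = c * Real.exp (K * (τ - s)) := by
    rcases eq_or_ne K 0 with rfl | hK0
    · simp [gronwallBound_K0]
    · rw [gronwallBound_of_K_ne_0 hK0]
      field_simp
      ring
  calc g τ ≤ c + K * G τ := h τ hτ
    _ ≤ c + K * gronwallBound 0 K c (τ - s) := by gcongr
    _ = c * Real.exp (K * (τ - s)) := hbound

section Growth

variable {d : ℕ} {r : ℝ} {L : ℝ → (Ph d r →L[ℝ] Rd d)} {M s : ℝ} {x : ℝ → Rd d}
  {hx : Continuous x}

theorem IsSol.norm_seg_le_add_integral (hr : 0 ≤ r) (hM : ∀ t, 0 ≤ t → ‖L t‖ ≤ M)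
    (hL : ContinuousOn L (Ici 0)) (hs : 0 ≤ s) (hsol : IsSol d r L s x hx) {w : ℝ}
    (hw : s ≤ w) :
    ‖seg d r x hx w‖ ≤ ‖seg d r x hx s‖ + M * ∫ u in s..w, ‖seg d r x hx u‖ := by
  have hM0 : 0 ≤ M := (L 0).opNorm_nonneg.trans (hM 0 le_rfl)
  have hg : Continuous fun u => ‖seg d r x hx u‖ := (continuous_seg hx).norm
  have hint_mono : ∀ v, s ≤ v → v ≤ w →
      ∫ u in s..v, M * ‖seg d r x hx u‖ ≤ M * ∫ u in s..w, ‖seg d r x hx u‖ := fun v hv hvw => by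
    rw [← intervalIntegral.integral_const_mul]
    exact intervalIntegral.integral_mono_interval le_rfl hv hvw
      (Filter.Eventually.of_forall fun u => by positivity)
      ((continuous_const.mul hg).intervalIntegrable _ _)
  have hint0 : 0 ≤ ∫ u in s..w, ‖seg d r x hx u‖ :=
    intervalIntegral.integral_nonneg hw fun u _ => norm_nonneg _
  refine (ContinuousMap.norm_le _ (by positivity)).2 fun θ => ?_
  change ‖x (w + θ.1)‖ ≤ _
  rcases le_or_gt (w + θ.1) s with hθ | hθ
  · have hmem : w + θ.1 - s ∈ Icc (-r) (0:ℝ) := ⟨by linarith [θ.2.1], by linarith⟩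
    calc ‖x (w + θ.1)‖ = ‖seg d r x hx s ⟨w + θ.1 - s, hmem⟩‖ := by simp [seg]
      _ ≤ ‖seg d r x hx s‖ := ContinuousMap.norm_coe_le_norm _ _
      _ ≤ _ := le_add_of_nonneg_right (mul_nonneg hM0 hint0)
  · have hθw : w + θ.1 ≤ w := by linarith [θ.2.2]
    have hderiv : ‖∫ u in s..(w + θ.1), L u (seg d r x hx u)‖ ≤
        ∫ u in s..(w + θ.1), M * ‖seg d r x hx u‖ :=
      intervalIntegral.norm_integral_le_of_norm_le hθ.le
        (Filter.Eventually.of_forall fun u hu => ((L u).le_opNorm _).trans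
          (mul_le_mul_of_nonneg_right (hM u (hs.trans hu.1.le)) (norm_nonneg _)))
        ((continuous_const.mul hg).intervalIntegrable _ _)
    rw [hsol.eq_add_integral hL hs hθ.le]
    linarith [norm_add_le (x s) (∫ u in s..(w + θ.1), L u (seg d r x hx u)),
      norm_le_norm_seg hr hx s, hint_mono _ hθ.le hθw]

theorem IsSol.norm_seg_le_mul_exp (hr : 0 ≤ r) (hM : ∀ t, 0 ≤ t → ‖L t‖ ≤ M)
    (hL : ContinuousOn L (Ici 0)) (hs : 0 ≤ s) (hsol : IsSol d r L s x hx) {τ : ℝ}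
    (hτ : s ≤ τ) : ‖seg d r x hx τ‖ ≤ ‖seg d r x hx s‖ * Real.exp (M * (τ - s)) :=
  le_mul_exp_of_le_add_integral (continuous_seg hx).norm (fun _ => norm_nonneg _)
    ((L 0).opNorm_nonneg.trans (hM 0 le_rfl))
    (fun _ hw => hsol.norm_seg_le_add_integral hr hM hL hs hw) hτ

theorem IsSolOp.seg_eq {T : ℝ → ℝ → (Ph d r →L[ℝ] Ph d r)} (hT : IsSolOp d r L T)
    (hr : 0 ≤ r) (hM : ∀ t, 0 ≤ t → ‖L t‖ ≤ M) (hL : ContinuousOn L (Ici 0)) (hs : 0 ≤ s)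
    (hsol : IsSol d r L s x hx) {τ : ℝ} (hτ : s ≤ τ) :
    seg d r x hx τ = T τ s (seg d r x hx s) := by
  obtain ⟨y, hy, hsoly, hy0, hyT⟩ := hT s hs (seg d r x hx s)
  have h := (hsol.sub hsoly).norm_seg_le_mul_exp hr hM hL hs hτ
  rw [seg_sub hx hy s, hy0, sub_self, norm_zero, zero_mul, norm_le_zero_iff, seg_sub hx hy,
    sub_eq_zero] at h
  rw [h, hyT τ hτ]

end Growth

-- By linearity, a δ₁-pseudo-solution scaled by δ₁ / δ is shadowed within 1, and scaling back
-- gives a solution within δ / δ₁ of a δ-pseudo-solution.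
theorem Shadowable.hyersUlam {d : ℕ} {r : ℝ} {L : ℝ → (Ph d r →L[ℝ] Rd d)}
    (hsh : Shadowable d r L) : HyersUlam d r L := by
  obtain ⟨δ₁, hδ₁, hshad⟩ := hsh 1 one_pos
  refine ⟨δ₁⁻¹, inv_pos.2 hδ₁, fun δ hδ y yd hy hydc hyd hdef => ?_⟩
  set c := δ₁ / δ with hc_def
  have hc : 0 < c := by positivity
  obtain ⟨x, hx, hsol, hclose⟩ := hshad (fun τ => c • y τ) (fun τ => c • yd τ)
    (hy.const_smul c) (hydc.const_smul c) (fun t ht => (hyd t ht).const_smul c) fun t ht => by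
      rw [seg_smul c hy, map_smul, ← smul_sub, norm_smul, Real.norm_of_nonneg hc.le]
      calc c * ‖yd t - L t (seg d r y hy t)‖ ≤ c * δ := by gcongr; exact hdef t ht
        _ = δ₁ := by rw [hc_def]; field_simp
  refine ⟨fun τ => c⁻¹ • x τ, hx.const_smul c⁻¹, hsol.const_smul c⁻¹, fun t ht => ?_⟩
  have hdist : seg d r (fun τ => c⁻¹ • x τ) (hx.const_smul c⁻¹) t - seg d r y hy t =
      c⁻¹ • (seg d r x hx t - seg d r (fun τ => c • y τ) (hy.const_smul c) t) := by
    rw [seg_smul c⁻¹ hx, seg_smul c hy, smul_sub, inv_smul_smul₀ hc.ne']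
  rw [hdist, norm_smul, Real.norm_of_nonneg (inv_pos.2 hc).le]
  calc c⁻¹ * ‖seg d r x hx t - seg d r (fun τ => c • y τ) (hy.const_smul c) t‖ ≤ c⁻¹ * 1 := by
        gcongr; exact hclose t ht
    _ = δ₁⁻¹ * δ := by rw [hc_def]; field_simp

theorem HyersUlam.exists_of_nonneg {d : ℕ} {r : ℝ} {L : ℝ → (Ph d r →L[ℝ] Rd d)}
    (h : HyersUlam d r L) :
    ∃ κ, 0 < κ ∧ ∀ δ, 0 ≤ δ → ∀ (y yd : ℝ → Rd d) (hy : Continuous y),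
      ContinuousOn yd (Ici 0) →
      (∀ t, 0 ≤ t → HasDerivWithinAt y (yd t) (Ici 0) t) →
      (∀ t, 0 ≤ t → ‖yd t - L t (seg d r y hy t)‖ ≤ δ) →
      ∃ (x : ℝ → Rd d) (hx : Continuous x), IsSol d r L 0 x hx ∧
        ∀ t, 0 ≤ t → ‖seg d r x hx t - seg d r y hy t‖ ≤ κ * δ := by
  obtain ⟨κ, hκ, hHU⟩ := h
  refine ⟨κ, hκ, fun δ hδ y yd hy hydc hyd hdef => ?_⟩
  rcases hδ.eq_or_lt with rfl | hδ
  · refine ⟨y, hy, fun t ht => ?_, fun t _ => by simp⟩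
    rw [← sub_eq_zero.1 (norm_le_zero_iff.1 (hdef t ht))]
    exact hyd t ht
  · exact hHU δ hδ y yd hy hydc hyd hdef

section UniformBound

open scoped Pointwise

variable {ι E F : Type*} [NormedAddCommGroup E] [NormedSpace ℝ E] [NormedAddCommGroup F]
  [NormedSpace ℝ F]

theorem forall_exists_norm_apply_sub_le_of_ball (A : ι → E →L[ℝ] F) (U : Submodule ℝ E)
    {ρ D : ℝ} (hρ : 0 < ρ) (h : ∀ ξ : E, ‖ξ‖ < ρ → ∃ u ∈ U, ∀ i, ‖A i (ξ - u)‖ ≤ D) (ξ : E) :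
    ∃ u ∈ U, ∀ i, ‖A i (ξ - u)‖ ≤ 2 * D / ρ * ‖ξ‖ := by
  rcases eq_or_ne ξ 0 with rfl | hξ
  · exact ⟨0, U.zero_mem, fun i => by simp⟩
  have hξ0 : 0 < ‖ξ‖ := norm_pos_iff.2 hξ
  set c := ρ / (2 * ‖ξ‖) with hc_def
  have hc : 0 < c := by positivity
  obtain ⟨u, hu, hbound⟩ := h (c • ξ) (by
    rw [norm_smul, Real.norm_of_nonneg hc.le, div_mul_eq_mul_div, mul_div_mul_right _ _ hξ0.ne']
    linarith)
  refine ⟨c⁻¹ • u, U.smul_mem _ hu, fun i => ?_⟩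
  rw [← inv_smul_smul₀ hc.ne' ξ, ← smul_sub, map_smul, norm_smul,
    Real.norm_of_nonneg (inv_pos.2 hc).le, inv_smul_smul₀ hc.ne' ξ]
  calc c⁻¹ * ‖A i (c • ξ - u)‖ ≤ c⁻¹ * D := by gcongr; exact hbound i
    _ = 2 * D / ρ * ‖ξ‖ := by rw [hc_def]; field_simp

-- Baire: the closed sets `B_N + K_N` (`B_N` the `N`-ball of `U`, `K_N` the vectors whose orbit
-- stays in the `N`-ball) cover `E`, so one of them contains a ball; differences of its points
-- fill a ball around `0`, and homogeneity does the rest.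
theorem exists_uniform_bound_modulo_finiteDimensional [CompleteSpace E] (A : ι → E →L[ℝ] F)
    (U : Submodule ℝ E) [FiniteDimensional ℝ U]
    (hbdd : ∀ ξ, ∃ u ∈ U, ∃ C, ∀ i, ‖A i (ξ - u)‖ ≤ C) :
    ∃ W, 0 ≤ W ∧ ∀ ξ, ∃ u ∈ U, ∀ i, ‖A i (ξ - u)‖ ≤ W * ‖ξ‖ := by
  set H : ℕ → Set E := fun N =>
    ((↑) '' Metric.closedBall (0 : U) N) + ⋂ i, {η | ‖A i η‖ ≤ N}
  have hmem : ∀ {N : ℕ} {φ}, φ ∈ H N → ∃ u ∈ U, ∀ i, ‖A i (φ - u)‖ ≤ N := by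
    rintro N φ ⟨_, ⟨u, -, rfl⟩, η, hη, rfl⟩
    refine ⟨u, u.2, fun i => ?_⟩
    simpa using mem_iInter.1 hη i
  have hclosed : ∀ N, IsClosed (H N) := fun N =>
    (isClosed_iInter fun i => isClosed_le (A i).continuous.norm continuous_const
      ).add_left_of_isCompact ((isCompact_closedBall _ _).image continuous_subtype_val)
  have hcover : ⋃ N, H N = univ := by
    refine eq_univ_of_forall fun ξ => ?_
    obtain ⟨u, hu, C, hC⟩ := hbdd ξ
    obtain ⟨N, hN⟩ := exists_nat_ge (max C ‖u‖)
    refine mem_iUnion.2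
      ⟨N, ⟨u, ⟨⟨u, hu⟩, ?_, rfl⟩, ξ - u, mem_iInter.2 fun i => ?_, add_sub_cancel u ξ⟩⟩
    · simpa using (le_max_right _ _).trans hN
    · exact (hC i).trans ((le_max_left _ _).trans hN)
  obtain ⟨N, φ₀, hφ₀⟩ := nonempty_interior_of_iUnion_of_closed hclosed hcover
  obtain ⟨ρ, hρ, hball⟩ := Metric.isOpen_iff.1 isOpen_interior φ₀ hφ₀
  have hsmall : ∀ ξ : E, ‖ξ‖ < ρ → ∃ u ∈ U, ∀ i, ‖A i (ξ - u)‖ ≤ 2 * N := fun ξ hξ => by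
    obtain ⟨u₁, hu₁, h₁⟩ := hmem (interior_subset (hball (by simpa using hξ : φ₀ + ξ ∈ _)))
    obtain ⟨u₂, hu₂, h₂⟩ := hmem (interior_subset (hball (Metric.mem_ball_self hρ)))
    refine ⟨u₁ - u₂, U.sub_mem hu₁ hu₂, fun i => ?_⟩
    have hsplit : ξ - (u₁ - u₂) = (φ₀ + ξ - u₁) - (φ₀ - u₂) := by abel
    rw [hsplit, map_sub, two_mul]
    exact (norm_sub_le _ _).trans (add_le_add (h₁ i) (h₂ i))
  exact ⟨2 * (2 * N) / ρ, by positivity, forall_exists_norm_apply_sub_le_of_ball A U hρ hsmall⟩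

-- Applied to `ξ = φ - χ`, the vector `u` of the previous lemma must be `φ`: `φ - u` lies in `U`
-- and, having a bounded orbit, in its complement `S`.
theorem exists_norm_apply_le_of_isCompl [CompleteSpace E] (A : ι → E →L[ℝ] F) {S U : Submodule ℝ E}
    [FiniteDimensional ℝ U] (hS : ∀ ξ, ξ ∈ S ↔ ∃ C, ∀ i, ‖A i ξ‖ ≤ C) (hSU : IsCompl S U) :
    ∃ W, 0 ≤ W ∧ ∀ φ ∈ U, ∀ χ ∈ S, ∀ i, ‖A i χ‖ ≤ W * ‖φ - χ‖ := by
  obtain ⟨W, hW0, hW⟩ := exists_uniform_bound_modulo_finiteDimensional A U fun ξ => by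
    obtain ⟨σ, u, hσ, hu, rfl⟩ := Submodule.codisjoint_iff_exists_add_eq.1 hSU.codisjoint ξ
    exact ⟨u, hu, by simpa using (hS σ).1 hσ⟩
  refine ⟨W, hW0, fun φ hφ χ hχ i => ?_⟩
  obtain ⟨u, hu, hbound⟩ := hW (φ - χ)
  have hφu : φ - u ∈ S := by
    have hsplit : φ - u = (φ - χ - u) + χ := by abel
    rw [hsplit]
    exact S.add_mem ((hS _).2 ⟨_, hbound⟩) hχ
  have hu_eq : u = φ :=
    (sub_eq_zero.1 ((Submodule.disjoint_def.1 hSU.disjoint) _ hφu (U.sub_mem hφ hu))).symm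
  simpa [hu_eq] using hbound i

end UniformBound

theorem mem_stableSub_iff {d : ℕ} {r : ℝ} {T : ℝ → ℝ → (Ph d r →L[ℝ] Ph d r)} {s : ℝ}
    {φ : Ph d r} : φ ∈ stableSub d r T s ↔ ∃ M, ∀ t, s ≤ t → ‖T t s φ‖ ≤ M :=
  Iff.rfl

theorem exists_norm_le_of_isCompl_stableSub {d : ℕ} {r : ℝ} {T : ℝ → ℝ → (Ph d r →L[ℝ] Ph d r)}
    {U : Submodule ℝ (Ph d r)} [FiniteDimensional ℝ U] (hU : IsCompl (stableSub d r T 0) U) :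
    ∃ W, 0 ≤ W ∧ ∀ φ ∈ U, ∀ χ ∈ stableSub d r T 0, ∀ τ, 0 ≤ τ → ‖T τ 0 χ‖ ≤ W * ‖φ - χ‖ := by
  obtain ⟨W, hW0, hW⟩ := exists_norm_apply_le_of_isCompl (fun τ : Ici (0 : ℝ) => T τ 0)
    (fun _ => mem_stableSub_iff.trans
      ⟨fun ⟨C, hC⟩ => ⟨C, fun τ => hC τ τ.2⟩, fun ⟨C, hC⟩ => ⟨C, fun τ hτ => hC ⟨τ, hτ⟩⟩⟩) hU
  exact ⟨W, hW0, fun φ hφ χ hχ τ hτ => hW φ hφ χ hχ ⟨τ, hτ⟩⟩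

namespace Real.smoothTransition

theorem deriv_of_nonpos {x : ℝ} (hx : x ≤ 0) : deriv smoothTransition x = 0 := by
  have h : HasDerivWithinAt smoothTransition 0 (Iic x) x :=
    (hasDerivWithinAt_const x (Iic x) (0 : ℝ)).congr
      (fun y (hy : y ≤ x) => zero_of_nonpos (hy.trans hx)) (zero_of_nonpos hx)
  exact h.deriv_eq_zero (uniqueDiffWithinAt_Iic x)

theorem deriv_of_one_le {x : ℝ} (hx : 1 ≤ x) : deriv smoothTransition x = 0 := by
  have h : HasDerivWithinAt smoothTransition 0 (Ici x) x :=
    (hasDerivWithinAt_const x (Ici x) (1 : ℝ)).congr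
      (fun y (hy : x ≤ y) => one_of_one_le (hx.trans hy)) (one_of_one_le hx)
  exact h.deriv_eq_zero (uniqueDiffWithinAt_Ici x)

theorem continuous_deriv : Continuous (deriv smoothTransition) :=
  (smoothTransition.contDiff (n := 1)).continuous_deriv le_rfl

theorem exists_abs_deriv_le : ∃ K, ∀ x, |deriv smoothTransition x| ≤ K :=
  continuous_deriv.bounded_above_of_compact_support <| HasCompactSupport.intro isCompact_Icc
    fun x hx => by
      rcases le_or_gt x 0 with h | h
      · exact deriv_of_nonpos h
      · exact deriv_of_one_le (not_lt.1 fun h' => hx ⟨h.le, h'.le⟩)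

end Real.smoothTransition

section Cutoff

open Real

variable {d : ℕ} {r : ℝ} {L : ℝ → (Ph d r →L[ℝ] Rd d)} {M s : ℝ} {x : ℝ → Rd d}
  {hx : Continuous x}

def smoothCutoff (s : ℝ) (x : ℝ → Rd d) (τ : ℝ) : Rd d := (1 - smoothTransition (τ - s)) • x τ

theorem continuous_smoothCutoff (hx : Continuous x) : Continuous (smoothCutoff s x) :=
  ((continuous_const.sub (smoothTransition.continuous.comp (continuous_sub_right s)))).smul hx

theorem seg_smoothCutoff_of_le (hx : Continuous x) {τ : ℝ} (hτ : τ ≤ s) :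
    seg d r (smoothCutoff s x) (continuous_smoothCutoff hx) τ = seg d r x hx τ := by
  ext1 θ
  simp [seg, smoothCutoff, smoothTransition.zero_of_nonpos (by linarith [θ.2.2] : τ + θ.1 - s ≤ 0)]

theorem seg_smoothCutoff_of_ge (hx : Continuous x) {τ : ℝ} (hτ : s + 1 + r ≤ τ) :
    seg d r (smoothCutoff s x) (continuous_smoothCutoff hx) τ = 0 := by
  ext1 θ
  simp [seg, smoothCutoff, smoothTransition.one_of_one_le (by linarith [θ.2.1] : 1 ≤ τ + θ.1 - s)]

theorem norm_smul_seg_sub_seg_smoothCutoff_le (τ : ℝ) :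
    ‖(1 - smoothTransition (τ - s)) • seg d r x hx τ
      - seg d r (smoothCutoff s x) (continuous_smoothCutoff hx) τ‖ ≤ 2 * ‖seg d r x hx τ‖ := by
  have habs : ∀ u, |1 - smoothTransition u| ≤ 1 := fun u =>
    abs_le.2 ⟨by linarith [smoothTransition.le_one u], by linarith [smoothTransition.nonneg u]⟩
  refine (ContinuousMap.norm_le _ (by positivity)).2 fun θ => ?_
  change ‖(1 - smoothTransition (τ - s)) • x (τ + θ.1)
    - (1 - smoothTransition (τ + θ.1 - s)) • x (τ + θ.1)‖ ≤ _
  rw [← sub_smul, norm_smul, two_mul, Real.norm_eq_abs]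
  calc |1 - smoothTransition (τ - s) - (1 - smoothTransition (τ + θ.1 - s))| * ‖x (τ + θ.1)‖
      ≤ (1 + 1) * ‖seg d r x hx τ‖ := by
        gcongr
        · exact (abs_sub _ _).trans (add_le_add (habs _) (habs _))
        · exact (seg d r x hx τ).norm_coe_le_norm θ
    _ = _ := by ring

def smoothCutoffDeriv (L : ℝ → (Ph d r →L[ℝ] Rd d)) (s : ℝ) (x : ℝ → Rd d) (hx : Continuous x)
    (τ : ℝ) : Rd d :=
  (1 - smoothTransition (τ - s)) • L τ (seg d r x hx τ) - deriv smoothTransition (τ - s) • x τ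

theorem IsSol.hasDerivWithinAt_smoothCutoff (hsol : IsSol d r L 0 x hx) {τ : ℝ} (hτ : 0 ≤ τ) :
    HasDerivWithinAt (smoothCutoff s x) (smoothCutoffDeriv L s x hx τ) (Ici 0) τ := by
  have hα : HasDerivAt (fun u => 1 - smoothTransition (u - s))
      (-deriv smoothTransition (τ - s)) τ := by
    simpa using ((smoothTransition.contDiff (n := 1)).differentiable one_ne_zero (τ - s)).hasDerivAt
      |>.comp_sub_const τ s |>.const_sub 1
  have h := hα.hasDerivWithinAt.smul (hsol τ hτ)
  rw [neg_smul, ← sub_eq_add_neg] at h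
  exact h

theorem continuousOn_smoothCutoffDeriv (hL : ContinuousOn L (Ici 0)) :
    ContinuousOn (smoothCutoffDeriv L s x hx) (Ici 0) :=
  ((continuous_const.sub (smoothTransition.continuous.comp (continuous_sub_right s))
    ).continuousOn.smul (hL.clm_apply (continuous_seg hx).continuousOn)).sub
    ((smoothTransition.continuous_deriv.comp (continuous_sub_right s)).smul hx).continuousOn

end Cutoff

section CutoffDefect

open Real

variable {d : ℕ} {r : ℝ} {L : ℝ → (Ph d r →L[ℝ] Rd d)} {M s : ℝ} {x : ℝ → Rd d}
  {hx : Continuous x}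

theorem exists_norm_seg_smoothCutoff_le (hx : Continuous x) :
    ∃ B, ∀ τ, 0 ≤ τ → ‖seg d r (smoothCutoff s x) (continuous_smoothCutoff hx) τ‖ ≤ B := by
  obtain ⟨B, hB⟩ := (isCompact_Icc (a := 0) (b := s + 1 + r)).exists_bound_of_continuousOn
    (continuous_seg (r := r) (continuous_smoothCutoff (s := s) hx)).continuousOn
  refine ⟨max B 0, fun τ hτ => ?_⟩
  rcases le_or_gt τ (s + 1 + r) with h | h
  · exact (hB τ ⟨hτ, h⟩).trans (le_max_left _ _)
  · rw [seg_smoothCutoff_of_ge hx h.le, norm_zero]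
    exact le_max_right _ _

theorem smoothCutoffDeriv_sub_eq (τ : ℝ) :
    smoothCutoffDeriv L s x hx τ - L τ (seg d r (smoothCutoff s x) (continuous_smoothCutoff hx) τ) =
      L τ ((1 - smoothTransition (τ - s)) • seg d r x hx τ
        - seg d r (smoothCutoff s x) (continuous_smoothCutoff hx) τ)
      - deriv smoothTransition (τ - s) • x τ := by
  simp only [smoothCutoffDeriv, map_sub, map_smul]
  abel

-- The defect vanishes before `s`, where the cutoff is `1`, and after `s + 1 + r`, where the
-- segments of the cut-off function vanish; in between it is controlled by Grönwall.
theorem exists_norm_smoothCutoff_defect_le (hr : 0 ≤ r) (hM : ∀ t, 0 ≤ t → ‖L t‖ ≤ M)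
    (hL : ContinuousOn L (Ici 0)) :
    ∃ C, 0 ≤ C ∧ ∀ s, 0 ≤ s → ∀ x hx, IsSol d r L 0 x hx → ∀ τ, 0 ≤ τ →
      ‖smoothCutoffDeriv L s x hx τ
          - L τ (seg d r (smoothCutoff s x) (continuous_smoothCutoff hx) τ)‖ ≤
        C * ‖seg d r x hx s‖ := by
  have hM0 : 0 ≤ M := (L 0).opNorm_nonneg.trans (hM 0 le_rfl)
  obtain ⟨K, hK⟩ := smoothTransition.exists_abs_deriv_le
  have hK0 : 0 ≤ K := (abs_nonneg _).trans (hK 0)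
  refine ⟨(2 * M + K) * exp (M * (1 + r)), by positivity, fun s hs x hx hsol τ hτ => ?_⟩
  rw [smoothCutoffDeriv_sub_eq]
  rcases le_or_gt τ s with h | h
  · rw [seg_smoothCutoff_of_le hx h, smoothTransition.zero_of_nonpos (sub_nonpos.2 h),
      smoothTransition.deriv_of_nonpos (sub_nonpos.2 h)]
    simp only [sub_zero, one_smul, sub_self, map_zero, zero_smul, norm_zero]
    positivity
  rcases le_or_gt (s + 1 + r) τ with h' | h'
  · have h1 : 1 ≤ τ - s := by linarith
    rw [seg_smoothCutoff_of_ge hx h', smoothTransition.one_of_one_le h1,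
      smoothTransition.deriv_of_one_le h1]
    simp only [sub_self, zero_smul ℝ (seg d r x hx τ), zero_smul, map_zero, norm_zero]
    positivity
  have hgrowth : ‖seg d r x hx τ‖ ≤ exp (M * (1 + r)) * ‖seg d r x hx s‖ := by
    rw [mul_comm]
    refine ((hsol.mono hs).norm_seg_le_mul_exp hr hM hL hs h.le).trans ?_
    gcongr
    linarith
  calc _ ≤ M * (2 * ‖seg d r x hx τ‖) + K * ‖seg d r x hx τ‖ := by
        refine (norm_sub_le _ _).trans (add_le_add ?_ ?_)
        · exact ((L τ).le_opNorm _).trans (mul_le_mul (hM τ hτ)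
            (norm_smul_seg_sub_seg_smoothCutoff_le τ) (norm_nonneg _) hM0)
        · rw [norm_smul, Real.norm_eq_abs]
          exact mul_le_mul (hK _) (norm_le_norm_seg hr hx τ) (norm_nonneg _) hK0
    _ = (2 * M + K) * ‖seg d r x hx τ‖ := by ring
    _ ≤ _ := by rw [mul_assoc]; gcongr

end CutoffDefect

-- The solution `xh` shadowing `y` starts at a point of the stable subspace (its orbit stays
-- near the bounded function `y`), at distance at most `B` from `φ = y₀ ∈ U`.
theorem norm_seg_le_of_shadowing {d : ℕ} {r : ℝ} {L : ℝ → (Ph d r →L[ℝ] Rd d)}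
    {T : ℝ → ℝ → (Ph d r →L[ℝ] Ph d r)} {M : ℝ} {U : Submodule ℝ (Ph d r)} {W B t : ℝ}
    (hr : 0 ≤ r) (hL : ContinuousOn L (Ici 0)) (hT : IsSolOp d r L T)
    (hM : ∀ t, 0 ≤ t → ‖L t‖ ≤ M) (hW0 : 0 ≤ W)
    (hW : ∀ φ ∈ U, ∀ χ ∈ stableSub d r T 0, ∀ τ, 0 ≤ τ → ‖T τ 0 χ‖ ≤ W * ‖φ - χ‖)
    {y xh : ℝ → Rd d} {hy : Continuous y} {hxh : Continuous xh} (hy0 : seg d r y hy 0 ∈ U)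
    (hybdd : ∃ C, ∀ τ, 0 ≤ τ → ‖seg d r y hy τ‖ ≤ C) (hsol : IsSol d r L 0 xh hxh)
    (hclose : ∀ τ, 0 ≤ τ → ‖seg d r xh hxh τ - seg d r y hy τ‖ ≤ B) (ht : 0 ≤ t) :
    ‖seg d r y hy t‖ ≤ (W + 1) * B := by
  have hxhT : ∀ τ, 0 ≤ τ → seg d r xh hxh τ = T τ 0 (seg d r xh hxh 0) := fun τ hτ =>
    hT.seg_eq hr hM hL le_rfl hsol hτ
  have hstable : seg d r xh hxh 0 ∈ stableSub d r T 0 := by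
    obtain ⟨C, hC⟩ := hybdd
    refine ⟨C + B, fun τ hτ => ?_⟩
    rw [← hxhT τ hτ, ← sub_add_cancel (seg d r xh hxh τ) (seg d r y hy τ)]
    exact (norm_add_le _ _).trans (by linarith [hclose τ hτ, hC τ hτ])
  have hstart : ‖seg d r y hy 0 - seg d r xh hxh 0‖ ≤ B := by
    rw [norm_sub_rev]; exact hclose 0 le_rfl
  have hxh_t : ‖seg d r xh hxh t‖ ≤ W * B := by
    rw [hxhT t ht]
    exact (hW _ hy0 _ hstable t ht).trans (mul_le_mul_of_nonneg_left hstart hW0)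
  calc ‖seg d r y hy t‖ ≤ ‖seg d r xh hxh t‖ + ‖seg d r xh hxh t - seg d r y hy t‖ := by
        rw [norm_sub_rev]; exact norm_le_insert' _ _
    _ ≤ W * B + B := add_le_add hxh_t (hclose t ht)
    _ = (W + 1) * B := by ring

/-- If L is uniformly bounded and Eq. x'(t) = L(t)x_t is shadowable, then
there exists Q' > 0 such that ‖T(t,s)φ‖ ≤ Q'‖φ‖ for 0 ≤ t ≤ s and φ ∈ 𝒰(s),
where T(t,s) is the inverse of T(s,t)|_𝒰(t); equivalently, every ψ ∈ 𝒰(t)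
satisfies ‖ψ‖ ≤ Q' ‖T(s,t)ψ‖. -/
theorem stmt13 (d : ℕ) (r : ℝ) (hr : 0 ≤ r)
    (L : ℝ → (Ph d r →L[ℝ] Rd d)) (hL : ContinuousOn L (Set.Ici 0))
    (T : ℝ → ℝ → (Ph d r →L[ℝ] Ph d r))
    (hT : IsSolOp d r L T) (hcoc : Cocycle d r T)
    (M : ℝ) (hM : ∀ t, 0 ≤ t → ‖L t‖ ≤ M)
    (hsh : Shadowable d r L)
    (U : Submodule ℝ (Ph d r)) (hUfd : FiniteDimensional ℝ ↥U)
    (hUcompl : IsCompl (stableSub d r T 0) U) :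
    ∃ Q', 0 < Q' ∧ ∀ t s, 0 ≤ t → t ≤ s → ∀ ψ ∈ U.map (T t 0 : Ph d r →ₗ[ℝ] Ph d r),
      ‖ψ‖ ≤ Q' * ‖T s t ψ‖ := by
  obtain ⟨W, hW0, hW⟩ := exists_norm_le_of_isCompl_stableSub hUcompl
  obtain ⟨κ, hκ, hHU⟩ := hsh.hyersUlam.exists_of_nonneg
  obtain ⟨C, hC0, hC⟩ := exists_norm_smoothCutoff_defect_le hr hM hL
  refine ⟨(W + 1) * κ * C + 1, by positivity, fun t s ht hts ψ hψ => ?_⟩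
  obtain ⟨φ, hφ, rfl⟩ := Submodule.mem_map.1 hψ
  obtain ⟨x, hx, hsol, hx0, hxT⟩ := hT 0 le_rfl φ
  have hs : 0 ≤ s := ht.trans hts
  -- shadow the cut-off of `x` at time `s`, a pseudo-solution with defect `C ‖x_s‖`
  obtain ⟨xh, hxh, hsolh, hclose⟩ := hHU (C * ‖seg d r x hx s‖) (by positivity) (smoothCutoff s x)
    (smoothCutoffDeriv L s x hx) (continuous_smoothCutoff hx) (continuousOn_smoothCutoffDeriv hL)
    (fun τ hτ => hsol.hasDerivWithinAt_smoothCutoff hτ) (hC s hs x hx hsol)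
  have h := norm_seg_le_of_shadowing hr hL hT hM hW0 hW
    (by rwa [seg_smoothCutoff_of_le hx hs, hx0]) (exists_norm_seg_smoothCutoff_le hx) hsolh
    hclose ht
  rw [seg_smoothCutoff_of_le hx hts, hxT t ht, hxT s hs] at h
  have hTs : T s t (T t 0 φ) = T s 0 φ := by rw [hcoc.2 s t 0 le_rfl ht hts]; rfl
  simp only [ContinuousLinearMap.coe_coe, hTs]
  nlinarith [norm_nonneg (T s 0 φ)]
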